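/- arXiv:2001.07572 — 2 statements merged into one kernel-verified Lean document; each statement's English description precedes it below -/
import Mathlib

section
/- Let A be a real n×n matrix, B a real n×m matrix, K a real m×n matrix, P and Q symmetric real n×n matrices, and R a symmetric real m×m matrix. Suppose the Kalman constraint equations Q + Aᵀ P (A + B K) − P = 0 and R K + Bᵀ P (A + B K) = 0 hold, P is positive definite, and Q + Kᵀ R K is positive definite. Then every complex eigenvalue λ of the closed-loop matrix A + B K satisfies |λ| < 1; in particular, any gain matrix K satisfying a Kalman constraint with P ≻ 0 and Q + Kᵀ R K ≻ 0 stabilizes the system. -/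
/-!
Expanding `(A + B K)ᵀ P (A + B K)` and substituting the two constraint equations gives the
discrete Lyapunov identity `(A + B K)ᵀ P (A + B K) + (Q + Kᵀ R K) = P`. Evaluating its quadratic
form at a complex eigenvector `v` of `A + B K` with eigenvalue `λ` gives
`(1 - |λ|²) v* P v = v* (Q + Kᵀ R K) v > 0`, and `v* P v ≥ 0` forces `|λ| < 1`.
-/

open Matrix
open scoped ComplexOrder

namespace Matrix

theorem lyapunov_eq_of_kalman_constraint {α n m : Type*} [CommRing α] [Fintype n] [Fintype m]
    {A P Q : Matrix n n α} {B : Matrix n m α} {K : Matrix m n α} {R : Matrix m m α}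
    (h1 : Q + Aᵀ * P * (A + B * K) - P = 0) (h2 : R * K + Bᵀ * P * (A + B * K) = 0) :
    (A + B * K)ᵀ * P * (A + B * K) + (Q + Kᵀ * R * K) = P := by
  have hA : Aᵀ * P * (A + B * K) = P - Q := by rw [← sub_eq_zero, ← h1]; abel
  have hB : Bᵀ * P * (A + B * K) = -(R * K) := eq_neg_of_add_eq_zero_right h2
  calc (A + B * K)ᵀ * P * (A + B * K) + (Q + Kᵀ * R * K)
      = Aᵀ * P * (A + B * K) + Kᵀ * (Bᵀ * P * (A + B * K)) + (Q + Kᵀ * R * K) := by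
        simp only [transpose_add, transpose_mul, Matrix.add_mul, Matrix.mul_assoc]
    _ = P := by rw [hA, hB, Matrix.mul_neg, ← Matrix.mul_assoc]; abel

section ofReal

variable {n 𝕜 : Type*} [Fintype n] [RCLike 𝕜]

theorem map_ofReal_transpose_mul_mul_add (T P S : Matrix n n ℝ) :
    (Tᵀ * P * T + S).map ((↑) : ℝ → 𝕜) =
      (T.map ((↑) : ℝ → 𝕜))ᴴ * P.map (↑) * T.map (↑) + S.map (↑) := by
  rw [← conjTranspose_map _ fun x ↦ (RCLike.conj_ofReal x).symm,
    conjTranspose_eq_transpose_of_trivial]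
  ext i j
  simp [Matrix.mul_apply, Finset.sum_mul]

theorem re_star_dotProduct_map_ofReal_mulVec (M : Matrix n n ℝ) (x : n → 𝕜) :
    RCLike.re (star x ⬝ᵥ M.map ((↑) : ℝ → 𝕜) *ᵥ x) =
      (fun i ↦ RCLike.re (x i)) ⬝ᵥ M *ᵥ (fun i ↦ RCLike.re (x i)) +
        (fun i ↦ RCLike.im (x i)) ⬝ᵥ M *ᵥ (fun i ↦ RCLike.im (x i)) := by
  simp only [dotProduct, mulVec, map_apply, Pi.star_apply, Finset.mul_sum,
    ← Finset.sum_add_distrib, map_sum]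
  refine Finset.sum_congr rfl fun i _ ↦ Finset.sum_congr rfl fun j _ ↦ ?_
  simp only [RCLike.mul_re, RCLike.star_def, RCLike.conj_re, RCLike.conj_im, RCLike.ofReal_re,
    RCLike.ofReal_im, RCLike.mul_im]
  ring

theorem PosDef.map_ofReal {M : Matrix n n ℝ} (hM : M.PosDef) :
    (M.map ((↑) : ℝ → 𝕜)).PosDef := by
  have hherm : (M.map ((↑) : ℝ → 𝕜)).IsHermitian := hM.isHermitian.map _ fun x ↦ by simp
  refine .of_dotProduct_mulVec_pos hherm fun x hx ↦ RCLike.pos_iff.mpr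
    ⟨?_, hherm.im_star_dotProduct_mulVec_self x⟩
  rw [re_star_dotProduct_map_ofReal_mulVec]
  set a := fun i ↦ RCLike.re (x i)
  set b := fun i ↦ RCLike.im (x i)
  have hnonneg (y : n → ℝ) : 0 ≤ y ⬝ᵥ M *ᵥ y := by
    simpa using hM.posSemidef.dotProduct_mulVec_nonneg y
  have hpos {y : n → ℝ} (hy : y ≠ 0) : 0 < y ⬝ᵥ M *ᵥ y := by
    simpa using hM.dotProduct_mulVec_pos hy
  by_cases ha : a = 0
  · have hb : b ≠ 0 := fun hb ↦
      hx (funext fun i ↦ RCLike.ext (by simpa using congrFun ha i) (by simpa using congrFun hb i))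
    linarith [hnonneg a, hpos hb]
  · linarith [hpos ha, hnonneg b]

end ofReal

theorem norm_lt_one_of_conjTranspose_mul_mul_add_eq {n 𝕜 : Type*} [Fintype n] [RCLike 𝕜]
    {T P S : Matrix n n 𝕜} (hP : P.PosSemidef) (hS : S.PosDef) (h : Tᴴ * P * T + S = P)
    {μ : 𝕜} {v : n → 𝕜} (hv : v ≠ 0) (hT : T *ᵥ v = μ • v) : ‖μ‖ < 1 := by
  have hquad : star v ⬝ᵥ (Tᴴ * P * T) *ᵥ v = (‖μ‖ ^ 2 : ℝ) * (star v ⬝ᵥ P *ᵥ v) := by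
    rw [← mulVec_mulVec, ← mulVec_mulVec, dotProduct_mulVec, ← star_mulVec, hT, star_smul,
      mulVec_smul, dotProduct_smul, smul_dotProduct, smul_eq_mul, smul_eq_mul, ← mul_assoc,
      RCLike.star_def, RCLike.mul_conj]
    norm_cast
  have hre := congrArg (fun M ↦ RCLike.re (star v ⬝ᵥ M *ᵥ v)) h
  simp only [add_mulVec, dotProduct_add, map_add, hquad, RCLike.re_ofReal_mul] at hre
  have hP0 := hP.re_dotProduct_nonneg v
  have hS0 := hS.re_dotProduct_pos hv
  exact (sq_lt_one_iff₀ (norm_nonneg μ)).mp (by nlinarith)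

end Matrix

theorem kalman_constraint_stabilizes_general {n m : ℕ}
    (A P Q : Matrix (Fin n) (Fin n) ℝ) (B : Matrix (Fin n) (Fin m) ℝ)
    (K : Matrix (Fin m) (Fin n) ℝ) (R : Matrix (Fin m) (Fin m) ℝ)
    (h1 : Q + Aᵀ * P * (A + B * K) - P = 0)
    (h2 : R * K + Bᵀ * P * (A + B * K) = 0)
    (hPpd : P.PosDef) (hQKRK : (Q + Kᵀ * R * K).PosDef) :
    ∀ (lam : ℂ) (v : Fin n → ℂ), v ≠ 0 →
      ((A + B * K).map (fun x : ℝ => (x : ℂ))).mulVec v = lam • v →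
        ‖lam‖ < 1 := by
  intro lam v hv heig
  have hLyap := (map_ofReal_transpose_mul_mul_add (𝕜 := ℂ) _ _ _).symm.trans
    (congrArg (Matrix.map · ((↑) : ℝ → ℂ)) (lyapunov_eq_of_kalman_constraint h1 h2))
  exact norm_lt_one_of_conjTranspose_mul_mul_add_eq hPpd.map_ofReal.posSemidef
    hQKRK.map_ofReal hLyap hv heig

/-- Any gain matrix `K` satisfying a Kalman constraint with `P ≻ 0` and
`Q + Kᵀ R K ≻ 0` stabilizes the system: every complex eigenvalue of the
closed-loop matrix `A + B K` has modulus less than one. -/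
theorem kalman_constraint_stabilizes {n m : ℕ} (hn : 0 < n) (hm : 0 < m)
    (A P Q : Matrix (Fin n) (Fin n) ℝ) (B : Matrix (Fin n) (Fin m) ℝ)
    (K : Matrix (Fin m) (Fin n) ℝ) (R : Matrix (Fin m) (Fin m) ℝ)
    (hP : P.IsSymm) (hQ : Q.IsSymm) (hR : R.IsSymm)
    (h1 : Q + Aᵀ * P * (A + B * K) - P = 0)
    (h2 : R * K + Bᵀ * P * (A + B * K) = 0)
    (hPpd : P.PosDef) (hQKRK : (Q + Kᵀ * R * K).PosDef) :
    ∀ (lam : ℂ) (v : Fin n → ℂ), v ≠ 0 →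
      ((A + B * K).map (fun x : ℝ => (x : ℂ))).mulVec v = lam • v →
        ‖lam‖ < 1 :=
  kalman_constraint_stabilizes_general A P Q B K R h1 h2 hPpd hQKRK
end

section
/- Let C be a real n×n matrix all of whose complex eigenvalues λ satisfy |λ| < 1, and let S be a real n×n matrix. If P₁ and P₂ are real n×n matrices both satisfying the discrete-time Lyapunov equation P = S + Cᵀ P C, then P₁ = P₂; that is, the solution of the Lyapunov equation is unique when C is stable. -/
/-!
The difference `Q = P₁ - P₂` satisfies the homogeneous equation `Q = Cᵀ Q C`, hence
`Q = (Cᵀ)ᵏ Q Cᵏ` for every `k`. Since every eigenvalue of `C` lies in the open unit disc, the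
spectral radius of `C` (as a complex matrix) is `< 1`, so Gelfand's formula gives `Cᵏ → 0`, and
therefore also `(Cᵀ)ᵏ = (Cᵏ)ᵀ → 0`. Letting `k → ∞` yields `Q = 0`.
-/

open Matrix Filter Topology
open scoped NNReal ENNReal

theorem spectrum.tendsto_pow_atTop_nhds_zero_of_spectralRadius_lt_one {A : Type*} [NormedRing A]
    [NormedAlgebra ℂ A] [CompleteSpace A] {a : A} (ha : spectralRadius ℂ a < 1) :
    Tendsto (a ^ ·) atTop (𝓝 0) := by
  obtain ⟨r, hρr, hr1⟩ := ENNReal.lt_iff_exists_nnreal_btwn.mp ha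
  have hroot : ∀ᶠ k : ℕ in atTop, (‖a ^ k‖₊ : ℝ≥0∞) ^ (1 / k : ℝ) < r :=
    (pow_nnnorm_pow_one_div_tendsto_nhds_spectralRadius a).eventually_lt_const hρr
  have hbound : ∀ᶠ k : ℕ in atTop, ‖a ^ k‖ ≤ (r : ℝ) ^ k := by
    filter_upwards [hroot, eventually_gt_atTop 0] with k hk hk0
    rw [one_div, ENNReal.rpow_inv_lt_iff (Nat.cast_pos.mpr hk0), ENNReal.rpow_natCast] at hk
    exact_mod_cast hk.le
  exact squeeze_zero_norm' hbound
    (tendsto_pow_atTop_nhds_zero_of_lt_one r.coe_nonneg (by exact_mod_cast hr1))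

namespace Matrix

variable {ι : Type*} [Fintype ι] [DecidableEq ι]

theorem exists_mulVec_eq_smul_of_mem_spectrum {K : Type*} [Field K] {A : Matrix ι ι K} {μ : K}
    (hμ : μ ∈ spectrum K A) : ∃ v : ι → K, v ≠ 0 ∧ A *ᵥ v = μ • v := by
  rw [← spectrum_toLin', ← Module.End.hasEigenvalue_iff_mem_spectrum] at hμ
  obtain ⟨v, hv⟩ := hμ.exists_hasEigenvector
  exact ⟨v, hv.2, by simpa using hv.apply_eq_smul⟩

theorem tendsto_pow_atTop_nhds_zero_of_forall_eigenvalue_norm_lt_one {A : Matrix ι ι ℂ}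
    (hA : ∀ (μ : ℂ) (v : ι → ℂ), v ≠ 0 → A *ᵥ v = μ • v → ‖μ‖ < 1) :
    Tendsto (A ^ ·) atTop (𝓝 0) := by
  cases isEmpty_or_nonempty ι
  · simpa only [Subsingleton.elim _ (0 : Matrix ι ι ℂ)] using tendsto_const_nhds
  -- Any submultiplicative norm will do; it induces the usual topology on matrices.
  let := Matrix.linftyOpNormedRing (n := ι) (α := ℂ)
  let := Matrix.linftyOpNormedAlgebra (n := ι) (R := ℂ) (α := ℂ)
  have : CompleteSpace (Matrix ι ι ℂ) := FiniteDimensional.complete ℂ _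
  refine spectrum.tendsto_pow_atTop_nhds_zero_of_spectralRadius_lt_one ?_
  simpa using spectrum.spectralRadius_lt_of_forall_lt A (r := 1) fun μ hμ => by
    obtain ⟨v, hv0, hv⟩ := exists_mulVec_eq_smul_of_mem_spectrum hμ
    exact_mod_cast hA μ v hv0 hv

theorem tendsto_pow_atTop_nhds_zero_of_forall_complex_eigenvalue_norm_lt_one {C : Matrix ι ι ℝ}
    (hC : ∀ (μ : ℂ) (v : ι → ℂ), v ≠ 0 → C.map (↑) *ᵥ v = μ • v → ‖μ‖ < 1) :
    Tendsto (C ^ ·) atTop (𝓝 0) := by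
  have h := ((continuous_id.matrix_map Complex.continuous_re).tendsto 0).comp
    (tendsto_pow_atTop_nhds_zero_of_forall_eigenvalue_norm_lt_one hC)
  convert h using 1
  · ext k : 1
    rw [Function.comp_apply, id, show C.map (↑) = Complex.ofRealHom.mapMatrix C from rfl,
      ← map_pow]
    ext
    simp
  · simp

end Matrix

theorem eq_zero_of_eq_mul_mul_of_tendsto_pow {M : Type*} [Semiring M] [TopologicalSpace M]
    [IsTopologicalSemiring M] [T2Space M] {B C Q : M} (hQ : Q = B * Q * C)
    (hB : Tendsto (B ^ ·) atTop (𝓝 0)) (hC : Tendsto (C ^ ·) atTop (𝓝 0)) : Q = 0 := by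
  have hpow : ∀ k : ℕ, B ^ k * Q * C ^ k = Q := by
    intro k
    induction k with
    | zero => simp
    | succ k ih =>
      calc B ^ (k + 1) * Q * C ^ (k + 1) = B ^ k * (B * Q * C) * C ^ k := by
            rw [pow_succ, pow_succ']
            simp only [mul_assoc]
        _ = Q := by rw [← hQ, ih]
  have h := (hB.mul_const Q).mul hC
  simp only [zero_mul, hpow] at h
  exact tendsto_const_nhds_iff.mp h

theorem lyapunov_solution_unique_general {n : ℕ}
    (C S : Matrix (Fin n) (Fin n) ℝ)
    (hstable : ∀ (lam : ℂ) (v : Fin n → ℂ), v ≠ 0 →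
      (C.map (fun x : ℝ => (x : ℂ))).mulVec v = lam • v → ‖lam‖ < 1)
    (P₁ P₂ : Matrix (Fin n) (Fin n) ℝ)
    (h1 : P₁ = S + Cᵀ * P₁ * C) (h2 : P₂ = S + Cᵀ * P₂ * C) :
    P₁ = P₂ := by
  have hC : Tendsto (C ^ ·) atTop (𝓝 0) :=
    tendsto_pow_atTop_nhds_zero_of_forall_complex_eigenvalue_norm_lt_one hstable
  have hCt : Tendsto (Cᵀ ^ ·) atTop (𝓝 0) := by
    simpa only [Function.comp_def, id, transpose_zero, transpose_pow] using
      ((continuous_id.matrix_transpose).tendsto 0).comp hC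
  have hQ : P₁ - P₂ = Cᵀ * (P₁ - P₂) * C := by
    calc P₁ - P₂ = (S + Cᵀ * P₁ * C) - (S + Cᵀ * P₂ * C) := by rw [← h1, ← h2]
      _ = Cᵀ * (P₁ - P₂) * C := by noncomm_ring
  exact sub_eq_zero.mp (eq_zero_of_eq_mul_mul_of_tendsto_pow hQ hCt hC)

/-- When `C` is stable (all complex eigenvalues have modulus `< 1`), the solution
of the discrete-time Lyapunov equation `P = S + Cᵀ P C` is unique. -/
theorem lyapunov_solution_unique {n : ℕ} (hn : 0 < n)
    (C S : Matrix (Fin n) (Fin n) ℝ)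
    (hstable : ∀ (lam : ℂ) (v : Fin n → ℂ), v ≠ 0 →
      (C.map (fun x : ℝ => (x : ℂ))).mulVec v = lam • v → ‖lam‖ < 1)
    (P₁ P₂ : Matrix (Fin n) (Fin n) ℝ)
    (h1 : P₁ = S + Cᵀ * P₁ * C) (h2 : P₂ = S + Cᵀ * P₂ * C) :
    P₁ = P₂ :=
  lyapunov_solution_unique_general C S hstable P₁ P₂ h1 h2
end
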